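/- Let G be a finite cyclic group. A subset G0 ⊆ G is weakly half-factorial (i.e., every minimal zero-sum sequence over G0 has integral cross number) if and only if there exists a generating element e of G such that G0 ⊆ { d·e : d a positive divisor of |G| }. -/

import Mathlib

open Multiset

section Defs

variable {G : Type*} [AddCommGroup G]

/-- `S` is a zero-sum sequence over `G0`. -/
def IsZeroSumSeq (G0 : Set G) (S : Multiset G) : Prop :=
  (∀ g ∈ S, g ∈ G0) ∧ S.sum = 0

/-- `S` is a minimal zero-sum sequence over `G0`. -/
def IsMinZeroSum (G0 : Set G) (S : Multiset G) : Prop :=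
  S ≠ 0 ∧ IsZeroSumSeq G0 S ∧
    ∀ T : Multiset G, T ≤ S → T ≠ 0 → T ≠ S → T.sum ≠ 0

/-- The set of lengths of factorizations of `B` into minimal zero-sum sequences over `G0`. -/
def LengthSet (G0 : Set G) (B : Multiset G) : Set ℕ :=
  { k | ∃ F : Multiset (Multiset G), F.card = k ∧ (∀ A ∈ F, IsMinZeroSum G0 A) ∧ F.sum = B }

/-- The set of successive distances of a set of naturals. -/
def DeltaOf (L : Set ℕ) : Set ℕ :=
  { d | ∃ a ∈ L, ∃ b ∈ L, a < b ∧ b - a = d ∧ ∀ c ∈ L, ¬(a < c ∧ c < b) }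

/-- The set of distances of the monoid of zero-sum sequences over `G0`. -/
def DeltaB (G0 : Set G) : Set ℕ :=
  ⋃ B ∈ { B : Multiset G | IsZeroSumSeq G0 B }, DeltaOf (LengthSet G0 B)

/-- Minimal distance, with the convention `min ∅ = 0`. -/
noncomputable def minDelta (G0 : Set G) : ℕ := sInf (DeltaB G0)

/-- Cross number of a sequence. -/
noncomputable def crossNum (S : Multiset G) : ℚ :=
  (S.map fun g => (1 : ℚ) / (addOrderOf g : ℚ)).sum

/-- `G0` is weakly half-factorial. -/
def WeaklyHF (G0 : Set G) : Prop :=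
  ∀ A : Multiset G, IsMinZeroSum G0 A → ∃ m : ℕ, crossNum A = (m : ℚ)

/-- `G0` is half-factorial. -/
def HalfFactorial (G0 : Set G) : Prop :=
  ∀ B : Multiset G, IsZeroSumSeq G0 B →
    ∀ k ∈ LengthSet G0 B, ∀ l ∈ LengthSet G0 B, k = l

end Defs

/-!
If every element of `G0` is `d • e` with `d ∣ n = |G|`, then `1 / ord (d • e) = d / n`, so a
zero-sum sequence `∏ dᵢ • e` has cross number `(∑ dᵢ) / n`, an integer because `(∑ dᵢ) • e = 0`.

Conversely, let `g, h ∈ G0` have orders `r, s` and `d = gcd r s`. Since `G` is cyclic,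
`(s / d) • h = k • (r / d) • g` for some `k`, and the zero-sum sequence
`g ^ ((r / d) (d - 1) k) h ^ (s / d)` has cross number `((d - 1) k + 1) / d`; weak
half-factoriality forces `k ≡ 1 [MOD d]`, hence `a • g = b • h` whenever `a s = b r`.
With `L` the lcm of the orders in `G0` and a Bézout relation `∑ cₓ (L / ord x) = 1`, the element
`y = ∑ cₓ • x` then satisfies `(L / ord z) • y = z` for all `z ∈ G0`. Finally `y = (n / L) • e`
for a generator `e`, because units of `ZMod L` lift to units of `ZMod n`.
-/

section CrossNumber

variable {G : Type*} [AddCommGroup G]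

theorem crossNum_add (A B : Multiset G) : crossNum (A + B) = crossNum A + crossNum B := by
  simp [crossNum]

theorem crossNum_cons (g : G) (A : Multiset G) :
    crossNum (g ::ₘ A) = 1 / (addOrderOf g : ℚ) + crossNum A := by
  simp [crossNum]

theorem crossNum_replicate (k : ℕ) (g : G) :
    crossNum (replicate k g) = k / (addOrderOf g : ℚ) := by
  simp [crossNum, map_replicate, nsmul_eq_mul, div_eq_mul_inv]

theorem crossNum_replicate_div_mul {g : G} {d : ℕ} (hg : addOrderOf g ≠ 0) (hd : d ∣ addOrderOf g)
    (j : ℕ) : crossNum (replicate (addOrderOf g / d * j) g) = j / d := by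
  have hd0 : (d : ℚ) ≠ 0 := Nat.cast_ne_zero.mpr (ne_zero_of_dvd_ne_zero hg hd)
  rw [crossNum_replicate, Nat.cast_mul, Nat.cast_div hd hd0]
  field_simp

theorem WeaklyHF.exists_crossNum_eq_natCast {G0 : Set G} (hG0 : WeaklyHF G0) {B : Multiset G}
    (hB : IsZeroSumSeq G0 B) : ∃ m : ℕ, crossNum B = m := by
  induction B using Multiset.strongInductionOn with
  | ih B ih =>
    by_cases hmin : IsMinZeroSum G0 B
    · exact hG0 B hmin
    by_cases hB0 : B = 0
    · exact ⟨0, by simp [hB0, crossNum]⟩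
    obtain ⟨T, hTB, hT0, hTB', hTsum⟩ : ∃ T ≤ B, T ≠ 0 ∧ T ≠ B ∧ T.sum = 0 := by
      simpa [IsMinZeroSum, hB0, hB] using hmin
    obtain ⟨U, rfl⟩ := Multiset.le_iff_exists_add.mp hTB
    have hUsum : U.sum = 0 := by simpa [hTsum] using hB.2
    obtain ⟨m₁, hm₁⟩ := ih T (lt_of_le_of_ne hTB hTB')
      ⟨fun g hg => hB.1 g (mem_add.mpr (Or.inl hg)), hTsum⟩
    obtain ⟨m₂, hm₂⟩ := ih U (lt_add_of_pos_left U (pos_iff_ne_zero.mpr hT0))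
      ⟨fun g hg => hB.1 g (mem_add.mpr (Or.inr hg)), hUsum⟩
    exact ⟨m₁ + m₂, by rw [crossNum_add, hm₁, hm₂, Nat.cast_add]⟩

theorem one_div_addOrderOf_nsmul {e : G} {d : ℕ} (he : addOrderOf e ≠ 0) (hd : d ∣ addOrderOf e) :
    1 / (addOrderOf (d • e) : ℚ) = d / addOrderOf e := by
  have hd0 : d ≠ 0 := ne_zero_of_dvd_ne_zero he hd
  rw [addOrderOf_nsmul_of_dvd hd0 hd, Nat.cast_div hd (by exact_mod_cast hd0), one_div_div]

theorem exists_crossNum_eq_div_and_sum_eq_nsmul {e : G} (he : addOrderOf e ≠ 0) {A : Multiset G}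
    (hA : ∀ x ∈ A, ∃ d, d ∣ addOrderOf e ∧ x = d • e) :
    ∃ D : ℕ, crossNum A = D / addOrderOf e ∧ A.sum = D • e := by
  induction A using Multiset.induction_on with
  | empty => exact ⟨0, by simp [crossNum]⟩
  | cons x A ih =>
    obtain ⟨D, hD, hsum⟩ := ih fun y hy => hA y (mem_cons_of_mem hy)
    obtain ⟨d, hd, rfl⟩ := hA x (mem_cons_self x A)
    refine ⟨d + D, ?_, by rw [sum_cons, hsum, add_nsmul]⟩
    rw [crossNum_cons, one_div_addOrderOf_nsmul he hd, hD, Nat.cast_add, add_div]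

theorem weaklyHF_of_subset_nsmul {e : G} (he : addOrderOf e ≠ 0) {G0 : Set G}
    (hG0 : G0 ⊆ {x | ∃ d, d ∣ addOrderOf e ∧ x = d • e}) : WeaklyHF G0 := by
  intro A hA
  obtain ⟨D, hD, hsum⟩ := exists_crossNum_eq_div_and_sum_eq_nsmul he fun x hx => hG0 (hA.2.1.1 x hx)
  have hdvd : addOrderOf e ∣ D := addOrderOf_dvd_of_nsmul_eq_zero (hsum ▸ hA.2.1.2)
  exact ⟨D / addOrderOf e, by rw [hD, Nat.cast_div hdvd (by exact_mod_cast he)]⟩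

end CrossNumber

theorem Finset.eq_one_of_forall_dvd_lcm_div {ι : Type*} {s : Finset ι} {f : ι → ℕ}
    (hf : ∀ i ∈ s, f i ≠ 0) {i : ι} (hi : i ∈ s) {c : ℕ} (hc : ∀ j ∈ s, c ∣ s.lcm f / f j) :
    c = 1 := by
  set L := s.lcm f
  have hL : 0 < L := Nat.pos_of_ne_zero (Finset.lcm_ne_zero_iff.mpr hf)
  have hcL : c ∣ L := (hc i hi).trans (Nat.div_dvd_of_dvd (Finset.dvd_lcm hi))
  have hLc : L ∣ L / c := Finset.lcm_dvd fun j hj =>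
    Nat.dvd_div_of_mul_dvd (mul_comm (f j) c ▸ Nat.mul_dvd_of_dvd_div (Finset.dvd_lcm hj) (hc j hj))
  have hLcL : L * c ∣ L * 1 := by
    rw [mul_one]
    nth_rewrite 2 [← Nat.div_mul_cancel hcL]
    exact Nat.mul_dvd_mul_right hLc c
  exact Nat.dvd_one.mp (Nat.dvd_of_mul_dvd_mul_left hL hLcL)

theorem Finset.exists_sum_lcm_div_mul_eq_one {ι : Type*} {s : Finset ι} {f : ι → ℕ}
    (hf : ∀ i ∈ s, f i ≠ 0) (hs : s.Nonempty) :
    ∃ c : ι → ℤ, ∑ i ∈ s, ((s.lcm f / f i : ℕ) : ℤ) * c i = 1 := by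
  obtain ⟨i, hi⟩ := hs
  let q : ι → ℤ := fun j => ((s.lcm f / f j : ℕ) : ℤ)
  obtain ⟨c, hc⟩ := Finset.gcd_eq_sum_mul s q
  have habs : (s.gcd q).natAbs = 1 := Finset.eq_one_of_forall_dvd_lcm_div hf hi fun j hj =>
    Int.natAbs_natCast (s.lcm f / f j) ▸ Int.natAbs_dvd_natAbs.mpr (Finset.gcd_dvd hj)
  have hnonneg : 0 ≤ s.gcd q := Finset.Int.finsetGcd_nonneg
  exact ⟨c, hc ▸ by omega⟩

theorem exists_nsmul_eq_of_forall_nsmul_eq {G : Type*} [AddCommGroup G] {T : Finset G}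
    (hT : ∀ x ∈ T, addOrderOf x ≠ 0)
    (hcompat : ∀ x ∈ T, ∀ z ∈ T, ∀ a b : ℕ, a * addOrderOf z = b * addOrderOf x → a • x = b • z) :
    ∃ y : G, ∀ z ∈ T, ∃ k : ℕ, k * addOrderOf z = addOrderOf y ∧ z = k • y := by
  rcases T.eq_empty_or_nonempty with rfl | hne
  · exact ⟨0, by simp⟩
  set L := T.lcm addOrderOf
  have hL : ∀ z ∈ T, L / addOrderOf z * addOrderOf z = L := fun z hz =>
    Nat.div_mul_cancel (Finset.dvd_lcm hz)
  obtain ⟨c, hc⟩ := Finset.exists_sum_lcm_div_mul_eq_one hT hne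
  set y := ∑ x ∈ T, c x • x
  have hy : ∀ z ∈ T, (L / addOrderOf z) • y = z := by
    intro z hz
    calc (L / addOrderOf z) • y = ∑ x ∈ T, c x • (L / addOrderOf z) • x := by
          rw [Finset.smul_sum]
          exact Finset.sum_congr rfl fun x _ => smul_comm _ _ _
      _ = ∑ x ∈ T, c x • (L / addOrderOf x) • z := Finset.sum_congr rfl fun x hx => by
          rw [hcompat x hx z hz _ _ (by rw [hL z hz, hL x hx])]
      _ = (∑ x ∈ T, ((L / addOrderOf x : ℕ) : ℤ) * c x) • z := by
          rw [Finset.sum_smul]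
          exact Finset.sum_congr rfl fun x _ => by rw [mul_smul, natCast_zsmul, smul_comm]
      _ = z := by rw [hc, one_smul]
  have hord : addOrderOf y = L := by
    refine Nat.dvd_antisymm (addOrderOf_dvd_of_nsmul_eq_zero ?_)
      (Finset.lcm_dvd fun z hz => hy z hz ▸ addOrderOf_smul_dvd _)
    simp only [y, Finset.smul_sum, smul_comm L]
    exact Finset.sum_eq_zero fun x hx => by
      rw [addOrderOf_dvd_iff_nsmul_eq_zero.mp (Finset.dvd_lcm hx), smul_zero]
  exact ⟨y, fun z hz => ⟨L / addOrderOf z, by rw [hord, hL z hz], (hy z hz).symm⟩⟩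

section Cyclic

variable {G : Type*} [AddCommGroup G] [Finite G] [IsAddCyclic G]

theorem exists_nsmul_eq_of_addOrderOf_nsmul_eq_zero {x y : G} (hy : addOrderOf x • y = 0) :
    ∃ k : ℕ, k • x = y := by
  have hle : AddSubgroup.zmultiples x ≤ (nsmulAddMonoidHom (addOrderOf x)).ker := by
    simp [AddSubgroup.zmultiples_le, addOrderOf_nsmul_eq_zero]
  have hcard : Nat.card (nsmulAddMonoidHom (α := G) (addOrderOf x)).ker ≤
      Nat.card (AddSubgroup.zmultiples x) := by
    rw [IsAddCyclic.card_nsmulAddMonoidHom_ker, Nat.card_zmultiples]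
    exact Nat.gcd_le_right _ (addOrderOf_pos x)
  refine (AddSubmonoid.mem_multiples_iff _ _).mp (mem_multiples_iff_mem_zmultiples.mpr ?_)
  rw [AddSubgroup.eq_of_le_of_card_ge hle hcard]
  exact hy

theorem exists_addOrderOf_eq_natCard_and_nsmul_eq (y : G) :
    ∃ e : G, addOrderOf e = Nat.card G ∧ ∃ d : ℕ, d * addOrderOf y = Nat.card G ∧ y = d • e := by
  obtain ⟨f, hf⟩ := IsAddCyclic.exists_generator (α := G)
  have hfn : addOrderOf f = Nat.card G := addOrderOf_eq_card_of_forall_mem_zmultiples hf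
  obtain ⟨a, rfl⟩ := (AddSubmonoid.mem_multiples_iff _ _).mp
    (mem_multiples_iff_mem_zmultiples.mpr (hf y))
  set n := Nat.card G
  have hn : n ≠ 0 := Nat.card_pos.ne'
  have : NeZero n := ⟨hn⟩
  obtain ⟨d, hdn, u, hu, hau⟩ := ZMod.eq_unit_mul_divisor (a : ZMod n)
  have hw : ((u.val : ℕ) : ZMod n) = u := ZMod.natCast_zmod_val u
  have hwn : u.val.Coprime n := (ZMod.isUnit_iff_coprime _ n).mp (by rwa [hw])
  have he : addOrderOf (u.val • f) = n := by
    rw [Nat.Coprime.addOrderOf_nsmul (by rw [hfn]; exact hwn.symm), hfn]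
  have hy : a • f = d • u.val • f := by
    rw [smul_smul, nsmul_eq_nsmul_iff_modEq, hfn, ← ZMod.natCast_eq_natCast_iff]
    push_cast
    rw [hw, hau, mul_comm]
  have hd0 : d ≠ 0 := ne_zero_of_dvd_ne_zero hn hdn
  refine ⟨u.val • f, he, d, ?_, hy⟩
  rw [hy, addOrderOf_nsmul_of_dvd hd0 (by rwa [he]), he, Nat.mul_div_cancel' hdn]

theorem WeaklyHF.nsmul_div_gcd_eq {G0 : Set G} (hG0 : WeaklyHF G0) {g h : G} (hg : g ∈ G0)
    (hh : h ∈ G0) :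
    (addOrderOf g / (addOrderOf g).gcd (addOrderOf h)) • g =
      (addOrderOf h / (addOrderOf g).gcd (addOrderOf h)) • h := by
  set r := addOrderOf g
  set s := addOrderOf h
  set d := r.gcd s
  have hr : r ≠ 0 := (addOrderOf_pos g).ne'
  have hs : s ≠ 0 := (addOrderOf_pos h).ne'
  have hdr : d ∣ r := Nat.gcd_dvd_left r s
  have hds : d ∣ s := Nat.gcd_dvd_right r s
  have hd : d ≠ 0 := Nat.gcd_ne_zero_left hr
  have hg' : addOrderOf ((r / d) • g) = d := by
    rw [addOrderOf_nsmul_of_dvd (Nat.div_ne_zero_iff_of_dvd hdr |>.mpr ⟨hr, hd⟩)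
      (Nat.div_dvd_of_dvd hdr), Nat.div_div_self hdr hr]
  set g' := (r / d) • g
  obtain ⟨k, hk⟩ : ∃ k : ℕ, k • g' = (s / d) • h := by
    apply exists_nsmul_eq_of_addOrderOf_nsmul_eq_zero
    rw [hg', smul_smul, Nat.mul_div_cancel' hds, addOrderOf_nsmul_eq_zero]
  have hcount : (d - 1) * k + k = d * k := by
    rw [← Nat.succ_mul, Nat.succ_eq_add_one, Nat.sub_add_cancel (Nat.one_le_iff_ne_zero.mpr hd)]
  -- `(d - 1) * k` copies of `g'` cancel `(s / d) • h = k • g'`; the cross number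
  -- `((d - 1) * k + 1) / d` of this zero-sum sequence is integral only if `k ≡ 1 [MOD d]`
  have hB : IsZeroSumSeq G0 (replicate (r / d * ((d - 1) * k)) g + replicate (s / d * 1) h) := by
    refine ⟨fun x hx => ?_, ?_⟩
    · rcases mem_add.mp hx with hx | hx <;> rw [eq_of_mem_replicate hx] <;> assumption
    · rw [sum_add, sum_replicate, sum_replicate, mul_one, ← hk, mul_comm (r / d), ← smul_smul,
        ← add_nsmul, hcount, mul_comm, ← smul_smul]
      change k • d • g' = 0
      rw [← hg', addOrderOf_nsmul_eq_zero, nsmul_zero]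
  obtain ⟨m, hm⟩ := hG0.exists_crossNum_eq_natCast hB
  rw [crossNum_add, crossNum_replicate_div_mul hr hdr, crossNum_replicate_div_mul hs hds, ← add_div,
    div_eq_iff (Nat.cast_ne_zero.mpr hd)] at hm
  have hmd : (d - 1) * k + 1 = m * d := by exact_mod_cast hm
  have hk1 : 1 ≡ k [MOD addOrderOf g'] := by
    rw [hg']
    simpa [Nat.ModEq, Nat.add_mod, Nat.mul_mod_right] using
      congrArg (· % d) (show d * k + 1 = k + m * d by omega)
  rw [← hk, ← nsmul_eq_nsmul_iff_modEq.mpr hk1, one_nsmul]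

theorem WeaklyHF.nsmul_eq_nsmul {G0 : Set G} (hG0 : WeaklyHF G0) {g h : G} (hg : g ∈ G0)
    (hh : h ∈ G0) {a b : ℕ} (hab : a * addOrderOf h = b * addOrderOf g) : a • g = b • h := by
  have key := hG0.nsmul_div_gcd_eq hg hh
  set r := addOrderOf g
  set s := addOrderOf h
  set d := r.gcd s
  have hd : 0 < d := Nat.gcd_pos_of_pos_left s (addOrderOf_pos g)
  have hdr : d ∣ r := Nat.gcd_dvd_left r s
  have hds : d ∣ s := Nat.gcd_dvd_right r s
  have hab' : a * (s / d) = b * (r / d) := by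
    apply Nat.eq_of_mul_eq_mul_right hd
    rw [mul_assoc, Nat.div_mul_cancel hds, mul_assoc, Nat.div_mul_cancel hdr, hab]
  obtain ⟨t, rfl⟩ : r / d ∣ a :=
    (Nat.coprime_div_gcd_div_gcd hd).dvd_of_dvd_mul_right ⟨b, by rw [hab', mul_comm]⟩
  have hb : b = s / d * t := by
    apply Nat.eq_of_mul_eq_mul_left (Nat.div_pos (Nat.le_of_dvd (addOrderOf_pos g) hdr) hd)
    rw [mul_comm, ← hab']
    ring
  rw [hb, mul_comm (r / d), ← smul_smul, key, smul_smul, mul_comm]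

end Cyclic

/-- A subset `G0` of a finite cyclic group `G` is weakly
half-factorial iff `G0 ⊆ {d•e : d ∣ |G|}` for some generating element `e`. -/
theorem stmt_6 {G : Type*} [AddCommGroup G] [Fintype G] (hcyc : IsAddCyclic G)
    (G0 : Set G) :
    WeaklyHF G0 ↔ ∃ e : G, addOrderOf e = Fintype.card G ∧
      G0 ⊆ { x : G | ∃ d : ℕ, 0 < d ∧ d ∣ Fintype.card G ∧ x = d • e } := by
  classical
  constructor
  · intro hG0
    obtain ⟨y, hy⟩ := exists_nsmul_eq_of_forall_nsmul_eq (T := G0.toFinset)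
      (fun x _ => (addOrderOf_pos x).ne') fun x hx z hz _ _ hab =>
        hG0.nsmul_eq_nsmul (Set.mem_toFinset.mp hx) (Set.mem_toFinset.mp hz) hab
    obtain ⟨e, he, d, hdy, rfl⟩ := exists_addOrderOf_eq_natCard_and_nsmul_eq y
    rw [Nat.card_eq_fintype_card] at he hdy
    refine ⟨e, he, fun z hz => ?_⟩
    obtain ⟨k, hkz, rfl⟩ := hy z (Set.mem_toFinset.mpr hz)
    have hcard : k * d * addOrderOf (k • d • e) = Fintype.card G := by
      rw [mul_comm k, mul_assoc, hkz, hdy]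
    exact ⟨k * d, Nat.pos_of_mul_pos_right (hcard ▸ Fintype.card_pos), Dvd.intro _ hcard,
      smul_smul k d e⟩
  · rintro ⟨e, he, hsub⟩
    refine weaklyHF_of_subset_nsmul (he ▸ Fintype.card_ne_zero) fun x hx => ?_
    obtain ⟨d, -, hd, rfl⟩ := hsub hx
    exact ⟨d, he ▸ hd, rfl⟩
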